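/- The optimal discriminator for the GAN loss: for fixed densities p (generated) and q (real) with respect to a common measure, the function d maximizing E_{z∼p}[log(1 − d(z))] + E_{z∼q}[log d(z)] over measurable d : Z → (0,1) is d*(z) = q(z)/(p(z) + q(z)) (almost everywhere where p+q > 0). -/

import Mathlib

open MeasureTheory Real

/- Pointwise, `t ↦ a log (1 - t) + b log t` is maximized at `t = b / (a + b)`; the tangent-line
bound `log x ≤ x - 1`, applied to `(1 - t) / (a / (a + b))` and `t / (b / (a + b))`, gives this
because the two linear remainders cancel. Integrating the pointwise bound gives the theorem. -/

lemma mul_log_le_mul_log_div_add {a s u : ℝ} (ha : 0 < a) (hs : 0 < s) (hu : 0 < u) :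
    a * log u ≤ a * log (a / s) + (s * u - a) := by
  have hlog : log (u * s / a) ≤ u * s / a - 1 := log_le_sub_one_of_pos (by positivity)
  rw [log_div (by positivity) ha.ne', log_mul hu.ne' hs.ne'] at hlog
  rw [log_div ha.ne' hs.ne']
  have hmul := mul_le_mul_of_nonneg_left hlog ha.le
  rw [mul_sub a (u * s / a), mul_div_cancel₀ _ ha.ne'] at hmul
  linarith

lemma mul_log_one_sub_add_mul_log_le {a b t : ℝ} (ha : 0 < a) (hb : 0 < b)
    (ht : t ∈ Set.Ioo (0 : ℝ) 1) :
    a * log (1 - t) + b * log t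
      ≤ a * log (1 - b / (a + b)) + b * log (b / (a + b)) := by
  obtain ⟨ht0, ht1⟩ := ht
  have hab : 0 < a + b := add_pos ha hb
  have hcompl : 1 - b / (a + b) = a / (a + b) := by field_simp; ring
  rw [hcompl]
  have h₁ := mul_log_le_mul_log_div_add ha hab (sub_pos.mpr ht1)
  have h₂ := mul_log_le_mul_log_div_add hb hab ht0
  linarith

theorem optimal_discriminator_general {Z : Type*} [MeasurableSpace Z]
    (μ : Measure Z) (p q : Z → ℝ)
    (hppos : ∀ z, 0 < p z) (hqpos : ∀ z, 0 < q z)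
    (d : Z → ℝ) (hd01 : ∀ z, d z ∈ Set.Ioo (0 : ℝ) 1)
    (hintd : Integrable
      (fun z => p z * Real.log (1 - d z) + q z * Real.log (d z)) μ)
    (hintstar : Integrable
      (fun z => p z * Real.log (1 - q z / (p z + q z))
        + q z * Real.log (q z / (p z + q z))) μ) :
    ∫ z, (p z * Real.log (1 - d z) + q z * Real.log (d z)) ∂μ
      ≤ ∫ z, (p z * Real.log (1 - q z / (p z + q z))
          + q z * Real.log (q z / (p z + q z))) ∂μ :=
  integral_mono hintd hintstar fun z =>
    mul_log_one_sub_add_mul_log_le (hppos z) (hqpos z) (hd01 z)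

/-- the optimal GAN discriminator.  With generated density `p`
and real density `q` (positive, integrating to 1) over a reference measure
`μ`, the discriminator `d*(z) = q(z)/(p(z)+q(z))` maximizes
`V(d) = ∫ p(z)·log(1−d(z)) + q(z)·log d(z) dμ` over measurable
`d : Z → (0,1)`. -/
theorem optimal_discriminator {Z : Type*} [MeasurableSpace Z]
    (μ : Measure Z) (p q : Z → ℝ)
    (hp : Measurable p) (hq : Measurable q)
    (hppos : ∀ z, 0 < p z) (hqpos : ∀ z, 0 < q z)
    (hpint : ∫ z, p z ∂μ = 1) (hqint : ∫ z, q z ∂μ = 1)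
    (d : Z → ℝ) (hd : Measurable d) (hd01 : ∀ z, d z ∈ Set.Ioo (0 : ℝ) 1)
    (hintd : Integrable
      (fun z => p z * Real.log (1 - d z) + q z * Real.log (d z)) μ)
    (hintstar : Integrable
      (fun z => p z * Real.log (1 - q z / (p z + q z))
        + q z * Real.log (q z / (p z + q z))) μ) :
    ∫ z, (p z * Real.log (1 - d z) + q z * Real.log (d z)) ∂μ
      ≤ ∫ z, (p z * Real.log (1 - q z / (p z + q z))
          + q z * Real.log (q z / (p z + q z))) ∂μ :=
  optimal_discriminator_general μ p q hppos hqpos d hd01 hintd hintstar
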